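/- arXiv:1810.11591 — 6 statements merged into one kernel-verified Lean document; each statement's English description precedes it below -/
import Mathlib

section
/- Let U, V, V' be independent random elements with V and V' identically distributed, let f be a measurable real-valued function with Z = f(U,V) square integrable, and set Z' = f(U,V'). Then Cov(Z, Z') = Var( E[Z | U] ) = E[ (E[Z|U])² ] − (E[Z])². -/
/-!
Put `h u = ∫ f (u, v) dν`, where `ν` is the law of `V`. Since `U` and `V` are independent, the law
of `(U, V)` is `law U ⊗ ν`, so Fubini on the sets `U ⁻¹' t` shows `E[Z | U] = h ∘ U`; hence
`E[Z] = E[h(U)]` and `Var(E[Z | U]) = E[h(U)²] - E[Z]²`. Likewise `(U, (V, V'))` has law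
`law U ⊗ (ν ⊗ ν)`, and integrating out `(V, V')` first turns `E[Z Z']` into `E[h(U)²]`, while
`(U, V')` has the same law as `(U, V)`, so `E[Z'] = E[Z]`.
-/

open MeasureTheory ProbabilityTheory Set

section

variable {Ω α β γ : Type*} [MeasurableSpace Ω] [MeasurableSpace α] [MeasurableSpace β]
  [MeasurableSpace γ] {μ : Measure Ω}

lemma indepFun_prodMk_of_iIndep_comap {U : Ω → α} {V : Ω → β} {W : Ω → γ}
    (hU : Measurable U) (hV : Measurable V) (hW : Measurable W)
    (h : iIndep ![MeasurableSpace.comap U inferInstance, MeasurableSpace.comap V inferInstance,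
      MeasurableSpace.comap W inferInstance] μ) :
    IndepFun U (fun ω => (V ω, W ω)) μ := by
  have hle : ∀ i, (![MeasurableSpace.comap U inferInstance, MeasurableSpace.comap V inferInstance,
      MeasurableSpace.comap W inferInstance] : Fin 3 → MeasurableSpace Ω) i ≤ ‹_› := by
    intro i
    fin_cases i
    exacts [hU.comap_le, hV.comap_le, hW.comap_le]
  have hsup := indep_iSup_of_disjoint hle h (S := {0}) (T := {1, 2}) (by simp)
  rw [iSup_singleton, iSup_insert, iSup_singleton] at hsup
  have hcomap : MeasurableSpace.comap (fun ω => (V ω, W ω)) inferInstance = _ :=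
    MeasurableSpace.comap_prodMk V W
  exact (IndepFun_iff_Indep _ _ _).2 (hcomap ▸ hsup)

lemma integral_prod_prod_mul_eq_integral_sq {κ : Measure α} {ν : Measure β} [SFinite κ]
    [IsProbabilityMeasure ν] {f : α × β → ℝ} (hf : MemLp f 2 (κ.prod ν)) :
    ∫ p, f (p.1, p.2.1) * f (p.1, p.2.2) ∂(κ.prod (ν.prod ν)) = ∫ u, (∫ v, f (u, v) ∂ν) ^ 2 ∂κ := by
  have hfst : MemLp (fun p : α × β × β => f (p.1, p.2.1)) 2 (κ.prod (ν.prod ν)) :=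
    hf.comp_measurePreserving ((MeasurePreserving.id κ).prod measurePreserving_fst)
  have hsnd : MemLp (fun p : α × β × β => f (p.1, p.2.2)) 2 (κ.prod (ν.prod ν)) :=
    hf.comp_measurePreserving ((MeasurePreserving.id κ).prod measurePreserving_snd)
  have hint : Integrable (fun p : α × β × β => f (p.1, p.2.1) * f (p.1, p.2.2))
      (κ.prod (ν.prod ν)) := hfst.integrable_mul hsnd
  rw [integral_prod _ hint]
  congr with u
  rw [sq, ← integral_prod_mul (fun v => f (u, v)) (fun v => f (u, v))]

variable [IsFiniteMeasure μ]

lemma condExp_comap_ae_eq_integral_of_indepFun {E : Type*} [NormedAddCommGroup E]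
    [NormedSpace ℝ E] [CompleteSpace E] {U : Ω → α} {V : Ω → β}
    (hU : Measurable U) (hV : Measurable V) (hUV : IndepFun U V μ)
    {f : α × β → E} (hf : StronglyMeasurable f) (hfi : Integrable (fun ω => f (U ω, V ω)) μ) :
    μ[fun ω => f (U ω, V ω) | MeasurableSpace.comap U inferInstance]
      =ᵐ[μ] fun ω => ∫ v, f (U ω, v) ∂(μ.map V) := by
  have hlaw := (indepFun_iff_map_prod_eq_prod_map_map hU.aemeasurable hV.aemeasurable).mp hUV
  have hfi' : Integrable f ((μ.map U).prod (μ.map V)) := by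
    rw [← hlaw]
    exact (integrable_map_measure hf.aestronglyMeasurable (hU.prodMk hV).aemeasurable).mpr hfi
  have hh : StronglyMeasurable fun u => ∫ v, f (u, v) ∂(μ.map V) := hf.integral_prod_right'
  have hhi : Integrable (fun ω => ∫ v, f (U ω, v) ∂(μ.map V)) μ :=
    (integrable_map_measure hh.aestronglyMeasurable hU.aemeasurable).mp hfi'.integral_prod_left
  refine (ae_eq_condExp_of_forall_setIntegral_eq hU.comap_le hfi
    (fun s _ _ => hhi.integrableOn) ?_ ?_).symm
  · rintro s ⟨t, ht, rfl⟩ -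
    calc ∫ ω in U ⁻¹' t, ∫ v, f (U ω, v) ∂(μ.map V) ∂μ
        = ∫ u in t, ∫ v, f (u, v) ∂(μ.map V) ∂(μ.map U) :=
          (setIntegral_map ht hh.aestronglyMeasurable hU.aemeasurable).symm
      _ = ∫ p in t ×ˢ univ, f p ∂((μ.map U).prod (μ.map V)) := by
          rw [setIntegral_prod _ hfi'.integrableOn, Measure.restrict_univ]
      _ = ∫ ω in U ⁻¹' t, f (U ω, V ω) ∂μ := by
          rw [← hlaw, setIntegral_map (ht.prod .univ) hf.aestronglyMeasurable
            (hU.prodMk hV).aemeasurable, mk_preimage_prod, preimage_univ, inter_univ]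
  · exact (hh.comp_measurable (Measurable.of_comap_le le_rfl)).aestronglyMeasurable

lemma identDistrib_prodMk_of_indepFun {U : Ω → α} {V V' : Ω → β}
    (hU : Measurable U) (hV : Measurable V) (hV' : Measurable V')
    (hUV : IndepFun U V μ) (hUV' : IndepFun U V' μ) (hid : IdentDistrib V V' μ μ) :
    IdentDistrib (fun ω => (U ω, V ω)) (fun ω => (U ω, V' ω)) μ μ where
  aemeasurable_fst := (hU.prodMk hV).aemeasurable
  aemeasurable_snd := (hU.prodMk hV').aemeasurable
  map_eq := by
    rw [(indepFun_iff_map_prod_eq_prod_map_map hU.aemeasurable hV.aemeasurable).mp hUV,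
      (indepFun_iff_map_prod_eq_prod_map_map hU.aemeasurable hV'.aemeasurable).mp hUV',
      hid.map_eq]

lemma integral_pickFreeze_mul_eq_integral_sq [IsProbabilityMeasure μ] {U : Ω → α} {V V' : Ω → β}
    (hU : Measurable U) (hV : Measurable V) (hV' : Measurable V')
    (hUW : IndepFun U (fun ω => (V ω, V' ω)) μ) (hVV' : IndepFun V V' μ)
    (hid : IdentDistrib V V' μ μ) {f : α × β → ℝ} (hf : Measurable f)
    (hf2 : MemLp (fun ω => f (U ω, V ω)) 2 μ) :
    ∫ ω, f (U ω, V ω) * f (U ω, V' ω) ∂μ = ∫ u, (∫ v, f (u, v) ∂(μ.map V)) ^ 2 ∂(μ.map U) := by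
  have : IsProbabilityMeasure (μ.map V) := Measure.isProbabilityMeasure_map hV.aemeasurable
  have hlawUV := (indepFun_iff_map_prod_eq_prod_map_map hU.aemeasurable hV.aemeasurable).mp
    (hUW.comp measurable_id measurable_fst)
  have hlaw : μ.map (fun ω => (U ω, (V ω, V' ω))) = (μ.map U).prod ((μ.map V).prod (μ.map V)) := by
    rw [(indepFun_iff_map_prod_eq_prod_map_map hU.aemeasurable (hV.prodMk hV').aemeasurable).mp hUW,
      (indepFun_iff_map_prod_eq_prod_map_map hV.aemeasurable hV'.aemeasurable).mp hVV',
      ← hid.map_eq]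
  have hf2' : MemLp f 2 ((μ.map U).prod (μ.map V)) := by
    rw [← hlawUV]
    exact (memLp_map_measure_iff hf.aestronglyMeasurable (hU.prodMk hV).aemeasurable).mpr hf2
  rw [← integral_prod_prod_mul_eq_integral_sq hf2', ← hlaw,
    integral_map (hU.prodMk (hV.prodMk hV')).aemeasurable (by fun_prop)]

end

/-- Let `U, V, V'` be independent random elements with `V` and `V'`
identically distributed, let `f` be a measurable real-valued function with
`Z = f(U,V)` square integrable, and set `Z' = f(U,V')`.  Then
`Cov(Z, Z') = Var(E[Z | U]) = E[(E[Z|U])²] - (E[Z])²`. -/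
theorem stmt2 {Ω α β : Type*} [MeasurableSpace Ω] [MeasurableSpace α] [MeasurableSpace β]
    (μ : Measure Ω) [IsProbabilityMeasure μ]
    (U : Ω → α) (V V' : Ω → β)
    (hU : Measurable U) (hV : Measurable V) (hV' : Measurable V')
    (hindep : iIndep
      ![MeasurableSpace.comap U inferInstance,
        MeasurableSpace.comap V inferInstance,
        MeasurableSpace.comap V' inferInstance] μ)
    (hid : IdentDistrib V V' μ μ)
    (f : α × β → ℝ) (hf : Measurable f)
    (Z Z' : Ω → ℝ)
    (hZ : Z = fun ω => f (U ω, V ω)) (hZ' : Z' = fun ω => f (U ω, V' ω))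
    (hZ2 : MemLp Z 2 μ)
    (g : Ω → ℝ) (hg : g = μ[Z | MeasurableSpace.comap U inferInstance]) :
    ((∫ ω, Z ω * Z' ω ∂μ) - (∫ ω, Z ω ∂μ) * (∫ ω, Z' ω ∂μ) = variance g μ) ∧
    (variance g μ = (∫ ω, (g ω)^2 ∂μ) - (∫ ω, Z ω ∂μ)^2) := by
  subst hZ hZ'
  have hUW := indepFun_prodMk_of_iIndep_comap hU hV hV' hindep
  have hUV : IndepFun U V μ := hUW.comp measurable_id measurable_fst
  have hUV' : IndepFun U V' μ := hUW.comp measurable_id measurable_snd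
  have hVV' : IndepFun V V' μ := hindep.indep (show (1 : Fin 3) ≠ 2 by decide)
  have hg_ae : g =ᵐ[μ] fun ω => ∫ v, f (U ω, v) ∂(μ.map V) :=
    hg ▸ condExp_comap_ae_eq_integral_of_indepFun hU hV hUV hf.stronglyMeasurable
      (hZ2.integrable one_le_two)
  have hmean_g : ∫ ω, g ω ∂μ = ∫ ω, f (U ω, V ω) ∂μ := hg ▸ integral_condExp hU.comap_le
  have hmean' : ∫ ω, f (U ω, V' ω) ∂μ = ∫ ω, f (U ω, V ω) ∂μ :=
    ((identDistrib_prodMk_of_indepFun hU hV hV' hUV hUV' hid).comp hf).integral_eq.symm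
  have hsecond : ∫ ω, f (U ω, V ω) * f (U ω, V' ω) ∂μ = ∫ ω, g ω ^ 2 ∂μ := by
    rw [integral_pickFreeze_mul_eq_integral_sq hU hV hV' hUW hVV' hid hf hZ2,
      integral_map hU.aemeasurable
        (hf.stronglyMeasurable.integral_prod_right'.measurable.pow_const 2).aestronglyMeasurable]
    exact integral_congr_ae (hg_ae.fun_comp (· ^ 2)).symm
  have hvar : variance g μ = ∫ ω, g ω ^ 2 ∂μ - (∫ ω, f (U ω, V ω) ∂μ) ^ 2 := by
    rw [variance_eq_sub (hg ▸ hZ2.condExp one_le_two), ← hmean_g]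
    rfl
  exact ⟨by rw [hsecond, hmean', hvar]; ring, hvar⟩
end

section
/- Let X = (X₁,…,X_d) be a vector of independent real random variables, f : ℝ^d → ℝ measurable with Z = f(X) such that all quantities below are defined, ν ⊂ {1,…,d}, and Z^ν the pick-freeze copy of Z. For s,t ∈ ℝ let h_{s,t}(x) = 1{min(s,t) ≤ x ≤ max(s,t)}. Then for every fixed pair (z₁,z₂) ∈ ℝ², Var( E[ h_{z₁,z₂}(Z) | X_ν ] ) = Cov( h_{z₁,z₂}(Z), h_{z₁,z₂}(Z^ν) ); consequently, if Z₁, Z₂ are independent copies of Z independent of (Z, Z^ν), then S^ν₂ := E_{Z₁,Z₂}[ Var( E[ h_{Z₁,Z₂}(Z) | X_ν ] ) ] = E_{Z₁,Z₂}[ Cov( h_{Z₁,Z₂}(Z), h_{Z₁,Z₂}(Z^ν) ) ], where the covariance is taken conditionally on (Z₁,Z₂). -/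
open MeasureTheory ProbabilityTheory Set

/-!
Split `X` into `P = X_ν` and `Q = X_{∼ν}`, so that `Z = G(P, Q)` and `Z^ν = G(P, Q')` with `Q'` an
independent copy of `Q`. Since `P` and `Q` are independent, `E[G(P, Q) | P] = ψ(P)` with
`ψ y = E[G(y, Q)]`; integrating out first `Q'` and then `Q` gives `E[G(P, Q) G(P, Q')] = E[ψ(P)²]`,
while `E[G(P, Q)] = E[G(P, Q')] = E[ψ(P)]`. For `h_{z₁,z₂}` the function `G` is a bounded
indicator, so all moments exist, and the integrated identity follows pointwise in `(z₁, z₂)`.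
-/

namespace ProbabilityTheory

lemma integrable_comp_of_norm_le {Ω γ E : Type*} {_ : MeasurableSpace Ω} {_ : MeasurableSpace γ}
    [NormedAddCommGroup E] {μ : Measure Ω} [IsFiniteMeasure μ] {R : Ω → γ} {H : γ → E} {C : ℝ}
    (hR : Measurable R) (hH : StronglyMeasurable H) (hHb : ∀ x, ‖H x‖ ≤ C) :
    Integrable (fun ω => H (R ω)) μ :=
  Integrable.of_bound (hH.comp_measurable hR).aestronglyMeasurable C (ae_of_all _ fun _ => hHb _)

section PickFreeze

variable {Ω α β F : Type*} {mΩ : MeasurableSpace Ω} {mα : MeasurableSpace α}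
  {mβ : MeasurableSpace β} [StandardBorelSpace β] [Nonempty β]
  [NormedAddCommGroup F] [NormedSpace ℝ F] [CompleteSpace F]
  {μ : Measure Ω} {P : Ω → α} {Q : Ω → β}

lemma IndepFun.condExp_comp_prodMk_ae_eq [IsFiniteMeasure μ] (hPQ : IndepFun P Q μ)
    (hP : Measurable P) (hQ : Measurable Q) {G : α × β → F} (hG : StronglyMeasurable G)
    (hGi : Integrable (fun ω => G (P ω, Q ω)) μ) :
    μ[fun ω => G (P ω, Q ω) | mα.comap P] =ᵐ[μ] fun ω => ∫ w, G (P ω, w) ∂(μ.map Q) := by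
  have hlaw : condDistrib Q P μ =ᵐ[μ.map P] Kernel.const α (μ.map Q) := by
    refine condDistrib_ae_eq_of_measure_eq_compProd P hQ.aemeasurable ?_
    rw [Measure.compProd_const]
    exact (indepFun_iff_map_prod_eq_prod_map_map hP.aemeasurable hQ.aemeasurable).mp hPQ
  filter_upwards [condExp_prod_ae_eq_integral_condDistrib hP hQ.aemeasurable hG hGi,
    ae_of_ae_map hP.aemeasurable hlaw] with ω hce hω
  rw [hce, hω, Kernel.const_apply]

lemma IndepFun.integral_comp_prodMk [IsFiniteMeasure μ] (hPQ : IndepFun P Q μ)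
    (hP : Measurable P) (hQ : Measurable Q) {G : α × β → F} (hG : StronglyMeasurable G)
    (hGi : Integrable (fun ω => G (P ω, Q ω)) μ) :
    ∫ ω, G (P ω, Q ω) ∂μ = ∫ ω, ∫ w, G (P ω, w) ∂(μ.map Q) ∂μ := by
  rw [← integral_condExp hP.comap_le,
    integral_congr_ae (hPQ.condExp_comp_prodMk_ae_eq hP hQ hG hGi)]

variable [IsProbabilityMeasure μ] {Q' : Ω → β} {G : α × β → ℝ} {C : ℝ}

omit [StandardBorelSpace β] [Nonempty β] in
lemma norm_integral_comp_prodMk_le (hQ : Measurable Q) (hGb : ∀ p, ‖G p‖ ≤ C) (y : α) :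
    ‖∫ w, G (y, w) ∂(μ.map Q)‖ ≤ C := by
  have : IsProbabilityMeasure (μ.map Q) := Measure.isProbabilityMeasure_map hQ.aemeasurable
  exact (norm_integral_le_of_norm_le_const (ae_of_all _ fun w => hGb (y, w))).trans_eq (by simp)

lemma integral_comp_prodMk_mul_eq_integral_sq (hP : Measurable P) (hQ : Measurable Q)
    (hQ' : Measurable Q') (hPQ : IndepFun P Q μ) (hPQQ' : IndepFun (fun ω => (P ω, Q ω)) Q' μ)
    (hlaw : μ.map Q' = μ.map Q) (hG : Measurable G) (hGb : ∀ p, ‖G p‖ ≤ C) :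
    ∫ ω, G (P ω, Q ω) * G (P ω, Q' ω) ∂μ = ∫ ω, (∫ w, G (P ω, w) ∂(μ.map Q)) ^ 2 ∂μ := by
  set ψ : α → ℝ := fun y => ∫ w, G (y, w) ∂(μ.map Q) with hψ
  have hGGm : StronglyMeasurable fun x : (α × β) × β => G x.1 * G (x.1.1, x.2) :=
    ((hG.comp measurable_fst).mul
      (hG.comp ((measurable_fst.comp measurable_fst).prodMk measurable_snd))).stronglyMeasurable
  have hGψm : StronglyMeasurable fun p : α × β => G p * ψ p.1 :=
    hG.stronglyMeasurable.mul
      (hG.stronglyMeasurable.integral_prod_right'.comp_measurable measurable_fst)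
  have hGGb (x : (α × β) × β) : ‖G x.1 * G (x.1.1, x.2)‖ ≤ C * C := by
    rw [norm_mul]
    exact mul_le_mul (hGb _) (hGb _) (norm_nonneg _) ((norm_nonneg _).trans (hGb x.1))
  have hGψb (p : α × β) : ‖G p * ψ p.1‖ ≤ C * C := by
    rw [norm_mul]
    exact mul_le_mul (hGb _) (norm_integral_comp_prodMk_le hQ hGb _) (norm_nonneg _)
      ((norm_nonneg _).trans (hGb p))
  calc ∫ ω, G (P ω, Q ω) * G (P ω, Q' ω) ∂μ
      = ∫ ω, ∫ w, G (P ω, Q ω) * G (P ω, w) ∂(μ.map Q') ∂μ :=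
        hPQQ'.integral_comp_prodMk (hP.prodMk hQ) hQ' hGGm
          (integrable_comp_of_norm_le ((hP.prodMk hQ).prodMk hQ') hGGm hGGb)
    _ = ∫ ω, G (P ω, Q ω) * ψ (P ω) ∂μ := by simp only [integral_const_mul, hlaw, hψ]
    _ = ∫ ω, ∫ w, G (P ω, w) * ψ (P ω) ∂(μ.map Q) ∂μ :=
        hPQ.integral_comp_prodMk hP hQ hGψm
          (integrable_comp_of_norm_le (hP.prodMk hQ) hGψm hGψb)
    _ = ∫ ω, ψ (P ω) ^ 2 ∂μ := by simp only [integral_mul_const, hψ, sq]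

lemma variance_condExp_comp_prodMk_eq (hP : Measurable P) (hQ : Measurable Q)
    (hQ' : Measurable Q') (hPQ : IndepFun P Q μ) (hPQQ' : IndepFun (fun ω => (P ω, Q ω)) Q' μ)
    (hlaw : μ.map Q' = μ.map Q) (hG : Measurable G) (hGb : ∀ p, ‖G p‖ ≤ C) :
    variance (μ[fun ω => G (P ω, Q ω) | mα.comap P]) μ
      = (∫ ω, G (P ω, Q ω) * G (P ω, Q' ω) ∂μ)
        - (∫ ω, G (P ω, Q ω) ∂μ) * (∫ ω, G (P ω, Q' ω) ∂μ) := by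
  set ψ : α → ℝ := fun y => ∫ w, G (y, w) ∂(μ.map Q)
  have hGs := hG.stronglyMeasurable
  have hψ : MemLp (fun ω => ψ (P ω)) 2 μ :=
    MemLp.of_bound (hGs.integral_prod_right'.comp_measurable hP).aestronglyMeasurable C
      (ae_of_all _ fun _ => norm_integral_comp_prodMk_le hQ hGb _)
  have hmean : ∫ ω, G (P ω, Q ω) ∂μ = ∫ ω, ψ (P ω) ∂μ :=
    hPQ.integral_comp_prodMk hP hQ hGs (integrable_comp_of_norm_le (hP.prodMk hQ) hGs hGb)
  have hPQ' : IndepFun P Q' μ := hPQQ'.comp measurable_fst measurable_id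
  have hmean' : ∫ ω, G (P ω, Q' ω) ∂μ = ∫ ω, ψ (P ω) ∂μ := by
    rw [hPQ'.integral_comp_prodMk hP hQ' hGs
      (integrable_comp_of_norm_le (hP.prodMk hQ') hGs hGb), hlaw]
  rw [variance_congr (hPQ.condExp_comp_prodMk_ae_eq hP hQ hGs
      (integrable_comp_of_norm_le (hP.prodMk hQ) hGs hGb)), variance_eq_sub hψ,
    integral_comp_prodMk_mul_eq_integral_sq hP hQ hQ' hPQ hPQQ' hlaw hG hGb, hmean, hmean']
  simp only [Pi.pow_apply]
  ring

end PickFreeze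

theorem variance_condExp_restrict_eq_pickFreeze {Ω ι E : Type*} {_ : MeasurableSpace Ω}
    [Fintype ι] [DecidableEq ι] [MeasurableSpace E] [StandardBorelSpace E] [Nonempty E]
    {μ : Measure Ω} [IsProbabilityMeasure μ] {X X' : Ω → ι → E} (hX : Measurable X)
    (hX' : Measurable X') (hcoord : iIndepFun (fun i ω => X ω i) μ) (hXX' : IndepFun X X' μ)
    (hid : IdentDistrib X' X μ μ) (s : Finset ι) {φ : (ι → E) → ℝ} {C : ℝ} (hφ : Measurable φ)
    (hφb : ∀ x, ‖φ x‖ ≤ C) :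
    variance (μ[fun ω => φ (X ω) |
        MeasurableSpace.comap (fun ω (i : s) => X ω i) inferInstance]) μ
      = (∫ ω, φ (X ω) * φ (fun i => if i ∈ s then X ω i else X' ω i) ∂μ)
        - (∫ ω, φ (X ω) ∂μ) * (∫ ω, φ (fun i => if i ∈ s then X ω i else X' ω i) ∂μ) := by
  -- `e x = (x restricted to s, x restricted to sᶜ)`, so `X^s = e.symm ((e X).1, (e X').2)`
  let e := MeasurableEquiv.piEquivPiSubtypeProd (fun _ : ι => E) (· ∈ s)
  have hmix : ∀ ω, e.symm ((e (X ω)).1, (e (X' ω)).2)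
      = fun i => if i ∈ s then X ω i else X' ω i := fun ω => by
    funext i
    by_cases hi : i ∈ s <;> simp [e, hi]
  have hPQ : IndepFun (fun ω => (e (X ω)).1) (fun ω => (e (X ω)).2) μ := by
    have hrestr : Measurable fun (v : (sᶜ : Finset ι) → E) (i : {i // i ∉ s}) =>
        v ⟨i, Finset.mem_compl.2 i.2⟩ :=
      measurable_pi_lambda _ fun _ => measurable_pi_apply _
    exact (hcoord.indepFun_finset s sᶜ disjoint_compl_right
      fun i => (measurable_pi_apply i).comp hX).comp measurable_id hrestr
  have key := variance_condExp_comp_prodMk_eq (μ := μ) (P := fun ω => (e (X ω)).1)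
    (Q := fun ω => (e (X ω)).2) (Q' := fun ω => (e (X' ω)).2) (G := fun p => φ (e.symm p))
    (e.measurable.fst.comp hX) (e.measurable.snd.comp hX) (e.measurable.snd.comp hX') hPQ
    (hXX'.comp e.measurable (e.measurable.snd)) (hid.comp e.measurable.snd).map_eq
    (hφ.comp e.symm.measurable) (fun p => hφb _)
  simp only [Prod.mk.eta, MeasurableEquiv.symm_apply_apply, hmix] at key
  exact key

end ProbabilityTheory

/-- In the pick-freeze setting with real output: for every fixed pair
`(z₁, z₂)`, `Var(E[h_{z₁,z₂}(Z) | X_ν]) = Cov(h_{z₁,z₂}(Z), h_{z₁,z₂}(Z^ν))`;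
consequently, integrating over independent copies `Z₁, Z₂` of `Z`,
`S^ν₂ = E_{Z₁,Z₂}[Var(E[h_{Z₁,Z₂}(Z) | X_ν])]
     = E_{Z₁,Z₂}[Cov(h_{Z₁,Z₂}(Z), h_{Z₁,Z₂}(Z^ν))]`,
where the covariance is taken conditionally on (i.e. at fixed values of) `(Z₁,Z₂)`. -/
theorem stmt3 {Ω : Type*} [MeasurableSpace Ω] (μ : Measure Ω) [IsProbabilityMeasure μ]
    {d : ℕ} (X X' : Ω → Fin d → ℝ)
    (hX : Measurable X) (hX' : Measurable X')
    (hcoord : iIndepFun (fun i ω => X ω i) μ)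
    (hXX' : IndepFun X X' μ) (hid : IdentDistrib X' X μ μ)
    (ν : Finset (Fin d)) (f : (Fin d → ℝ) → ℝ) (hf : Measurable f)
    (Z Zν : Ω → ℝ)
    (hZ : Z = fun ω => f (X ω))
    (hZν : Zν = fun ω => f (fun i => if i ∈ ν then X ω i else X' ω i))
    (h : ℝ → ℝ → ℝ → ℝ)
    (hh : ∀ s t x, h s t x = if min s t ≤ x ∧ x ≤ max s t then 1 else 0) :
    (∀ z₁ z₂ : ℝ,
      variance (μ[(fun ω => h z₁ z₂ (Z ω)) |
          MeasurableSpace.comap (fun ω (i : ν) => X ω i) inferInstance]) μ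
        = (∫ ω, h z₁ z₂ (Z ω) * h z₁ z₂ (Zν ω) ∂μ)
          - (∫ ω, h z₁ z₂ (Z ω) ∂μ) * (∫ ω, h z₁ z₂ (Zν ω) ∂μ)) ∧
    (∫ p : ℝ × ℝ,
        variance (μ[(fun ω => h p.1 p.2 (Z ω)) |
          MeasurableSpace.comap (fun ω (i : ν) => X ω i) inferInstance]) μ
        ∂((μ.map Z).prod (μ.map Z))
      = ∫ p : ℝ × ℝ,
          ((∫ ω, h p.1 p.2 (Z ω) * h p.1 p.2 (Zν ω) ∂μ)
            - (∫ ω, h p.1 p.2 (Z ω) ∂μ) * (∫ ω, h p.1 p.2 (Zν ω) ∂μ))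
          ∂((μ.map Z).prod (μ.map Z))) := by
  subst hZ hZν
  have hind : ∀ z₁ z₂, h z₁ z₂ = (Icc (min z₁ z₂) (max z₁ z₂)).indicator 1 := fun z₁ z₂ => by
    funext x
    simp [hh, indicator, mem_Icc]
  have key : ∀ z₁ z₂ : ℝ, _ := fun z₁ z₂ =>
    variance_condExp_restrict_eq_pickFreeze hX hX' hcoord hXX' hid ν
      (φ := fun x => h z₁ z₂ (f x)) (C := 1)
      (by rw [hind]; exact (measurable_one.indicator measurableSet_Icc).comp hf)
      (fun x => by rw [hind]; exact norm_indicator_le_norm_self 1 _ |>.trans (by simp))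
  exact ⟨key, integral_congr_ae (ae_of_all _ fun p => key p.1 p.2)⟩
end

section
/- (Bound for the term A.) In the pick-freeze setting with real output, let (Z_j, Z_j^ν), j = 1,…,N, be i.i.d. copies of (Z, Z^ν) and W₁,…,W_N i.i.d. copies of Z independent of them. For τ ∈ P_{N,2} set G(Z_j, W_τ) = h_{W_τ}(Z_j) h_{W_τ}(Z_j^ν), and define A_N = (1/(N·C(N,2))) Σ_{j=1}^N Σ_{τ ∈ P_{N,2}} ( G(Z_j, W_τ) − E[ G(Z_j, W_τ) ] ). Then for every s > 0, P( A_N > 2s ) ≤ 2 exp( − N s² / 8 ). -/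
/-!
Hoeffding's argument for U-statistics. Write `T(j,k,l)` for the centred kernel
`G(Z_j, (W_k, W_l)) - E[…]`, symmetric in `k, l` and bounded by `1`. Up to the `2N(N-1)` diagonal
terms with `j ∈ τ`, the double sum defining `A_N` is half the sum of `T` over ordered triples of
distinct indices, so `N A_N ≤ (N-2) U + 2` where `U` is the average of `T` over those triples.
Averaging over all permutations `σ` of the indices, `U` equals the mean over `σ` of
`m⁻¹ ∑_{k<m} T(σ(3k), σ(3k+1), σ(3k+2))`, `m = ⌊N/3⌋`. Each of these is a mean of `m` independent
centred variables with values in an interval of length one, hence sub-Gaussian with variance proxy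
`1/(4m)` by Hoeffding's lemma, and by convexity of `exp` so is their average `U`. The Chernoff
bound gives `P(U ≥ s) ≤ exp(-2ms²) ≤ exp(-Ns²/8)`, and `A_N > 2s` forces `U ≥ s` once `Ns ≥ 2`;
when `Ns < 2` or `s > 1/2` the bound holds trivially because `A_N ≤ 1`.
-/

open MeasureTheory ProbabilityTheory Real Set

/-- The indicator function of the "ball" (closed interval) with diameter the segment
joining `s` and `t` on the real line: `h_{s,t}(x) = 1{min(s,t) ≤ x ≤ max(s,t)}`. -/
noncomputable def hball (s t x : ℝ) : ℝ := if min s t ≤ x ∧ x ≤ max s t then 1 else 0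

/-- `G(Z_j, W_τ) = h_{W_τ}(Z_j) h_{W_τ}(Z_j^ν)` where `ξ j = ((Z_j, Z_j^ν), W_j)` and
`τ = (k₁, k₂)` indexes the pair `W_τ = (W_{k₁}, W_{k₂})`. -/
noncomputable def Gterm {Ω : Type*} {N : ℕ} (ξ : Fin N → Ω → (ℝ × ℝ) × ℝ)
    (j : Fin N) (τ : Fin N × Fin N) (ω : Ω) : ℝ :=
  hball ((ξ τ.1 ω).2) ((ξ τ.2 ω).2) ((ξ j ω).1.1) *
  hball ((ξ τ.1 ω).2) ((ξ τ.2 ω).2) ((ξ j ω).1.2)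

/-- The centred term `A_N = (1/(N·C(N,2))) Σ_j Σ_{τ ∈ P_{N,2}} (G(Z_j,W_τ) - E[G(Z_j,W_τ)])`. -/
noncomputable def Aterm {Ω : Type*} [MeasurableSpace Ω] (μ : Measure Ω) {N : ℕ}
    (ξ : Fin N → Ω → (ℝ × ℝ) × ℝ) (ω : Ω) : ℝ :=
  ((N : ℝ) * (N.choose 2 : ℝ))⁻¹ *
    ∑ j : Fin N, ∑ τ ∈ Finset.univ.filter (fun p : Fin N × Fin N => p.1 < p.2),
      (Gterm ξ j τ ω - ∫ ω', Gterm ξ j τ ω' ∂μ)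

open scoped NNReal

theorem MulAction.card_nsmul_sum_smul_eq {G X M : Type*} [Group G] [Fintype G] [MulAction G X]
    [Fintype X] [IsPretransitive G X] [AddCommMonoid M] (f : X → M) (x : X) :
    Fintype.card X • ∑ g : G, f (g • x) = Fintype.card G • ∑ y, f y := by
  have h_orbit (y : X) : ∑ g : G, f (g • y) = ∑ g : G, f (g • x) := by
    obtain ⟨ρ, rfl⟩ := exists_smul_eq G x y
    exact Fintype.sum_equiv (Equiv.mulRight ρ) _ _ fun g => by simp [mul_smul]
  calc Fintype.card X • ∑ g : G, f (g • x) = ∑ y : X, ∑ g : G, f (g • y) := by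
        simp [h_orbit]
    _ = ∑ g : G, ∑ y, f (g • y) := Finset.sum_comm
    _ = Fintype.card G • ∑ y, f y := by
        simp [fun g : G => Fintype.sum_equiv (MulAction.toPerm g) (fun y => f (g • y)) f
          fun _ => rfl]

namespace ProbabilityTheory

namespace HasSubgaussianMGF

variable {Ω κ : Type*} [MeasurableSpace Ω] {μ : Measure Ω} {c : ℝ≥0}

lemma sum_mul_of_sum_eq_one {Y : κ → Ω → ℝ} {s : Finset κ} {w : κ → ℝ}
    (hw₀ : ∀ i ∈ s, 0 ≤ w i) (hw₁ : ∑ i ∈ s, w i = 1)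
    (hY : ∀ i ∈ s, HasSubgaussianMGF (Y i) c μ) :
    HasSubgaussianMGF (fun ω => ∑ i ∈ s, w i * Y i ω) c μ := by
  have h_jensen (t : ℝ) (ω : Ω) :
      exp (t * ∑ i ∈ s, w i * Y i ω) ≤ ∑ i ∈ s, w i * exp (t * Y i ω) := by
    have := convexOn_exp.map_sum_le hw₀ hw₁ (p := fun i => t * Y i ω) fun _ _ => mem_univ _
    simpa [Finset.mul_sum, smul_eq_mul, mul_left_comm t] using this
  have h_int (t : ℝ) : Integrable (fun ω => ∑ i ∈ s, w i * exp (t * Y i ω)) μ :=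
    integrable_finsetSum _ fun i hi => ((hY i hi).integrable_exp_mul t).const_mul _
  have h_int_exp (t : ℝ) : Integrable (fun ω => exp (t * ∑ i ∈ s, w i * Y i ω)) μ := by
    refine (h_int t).mono' ?_ (ae_of_all _ fun ω => ?_)
    · refine continuous_exp.comp_aestronglyMeasurable (AEStronglyMeasurable.const_mul ?_ t)
      exact Finset.aestronglyMeasurable_fun_sum _ fun i hi =>
        (hY i hi).aestronglyMeasurable.const_mul _
    · rw [Real.norm_of_nonneg (exp_nonneg _)]
      exact h_jensen t ω
  refine ⟨h_int_exp, fun t => ?_⟩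
  calc mgf (fun ω => ∑ i ∈ s, w i * Y i ω) μ t
      ≤ ∫ ω, ∑ i ∈ s, w i * exp (t * Y i ω) ∂μ :=
        integral_mono (h_int_exp t) (h_int t) (h_jensen t)
    _ = ∑ i ∈ s, w i * mgf (Y i) μ t := by
        rw [integral_finsetSum _ fun i hi => ((hY i hi).integrable_exp_mul t).const_mul _]
        simp [mgf, integral_const_mul]
    _ ≤ ∑ i ∈ s, w i * exp (c * t ^ 2 / 2) :=
        Finset.sum_le_sum fun i hi => mul_le_mul_of_nonneg_left ((hY i hi).mgf_le t) (hw₀ i hi)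
    _ = exp (c * t ^ 2 / 2) := by rw [← Finset.sum_mul, hw₁, one_mul]

end HasSubgaussianMGF

variable {Ω ι κ α : Type*} [MeasurableSpace Ω] {mα : MeasurableSpace α} {μ : Measure Ω}
  {ξ : ι → Ω → α}

lemma iIndepFun.indepFun_of_measurable_biSup (hξ : iIndepFun ξ μ) (hξm : ∀ i, Measurable (ξ i))
    {S T : Set ι} (hST : Disjoint S T) {X Y : Ω → ℝ}
    (hX : Measurable[⨆ i ∈ S, mα.comap (ξ i)] X) (hY : Measurable[⨆ i ∈ T, mα.comap (ξ i)] Y) :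
    IndepFun X Y μ := by
  rw [IndepFun_iff_Indep]
  exact indep_of_indep_of_le
    (indep_iSup_of_disjoint (fun i => (hξm i).comap_le) hξ.iIndep hST) hX.comap_le hY.comap_le

lemma iIndepFun.hasSubgaussianMGF_sum_of_pairwiseDisjoint (hξ : iIndepFun ξ μ)
    (hξm : ∀ i, Measurable (ξ i)) {B : κ → Set ι} {Y : κ → Ω → ℝ} {c : κ → ℝ≥0} {s : Finset κ}
    (hB : (s : Set κ).PairwiseDisjoint B)
    (hYm : ∀ k ∈ s, Measurable[⨆ i ∈ B k, mα.comap (ξ i)] (Y k))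
    (hY : ∀ k ∈ s, HasSubgaussianMGF (Y k) (c k) μ) :
    HasSubgaussianMGF (fun ω => ∑ k ∈ s, Y k ω) (∑ k ∈ s, c k) μ := by
  classical
  have := hξ.isProbabilityMeasure
  induction s using Finset.induction_on with
  | empty => simp
  | insert k s hks ih =>
    simp_rw [Finset.sum_insert hks]
    have h_meas : Measurable[⨆ i ∈ ⋃ l ∈ s, B l, mα.comap (ξ i)] fun ω => ∑ l ∈ s, Y l ω := by
      refine Finset.measurable_fun_sum _ fun l hl => (hYm l (by simp [hl])).mono ?_ le_rfl
      exact biSup_mono fun i hi => mem_biUnion hl hi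
    have h_disj : Disjoint (B k) (⋃ l ∈ s, B l) := by
      refine disjoint_iUnion₂_right.2 fun l hl => hB (by simp) (by simp [hl]) ?_
      rintro rfl
      exact hks hl
    exact (hY k (by simp)).add_of_indepFun
      (ih (hB.subset (by simp)) (fun l hl => hYm l (by simp [hl])) fun l hl => hY l (by simp [hl]))
      (hξ.indepFun_of_measurable_biSup hξm h_disj (hYm k (by simp)) h_meas)

variable {r : ℕ}

noncomputable def centeredKernel (μ : Measure Ω) (Φ : (Fin r → α) → ℝ) (ξ : ι → Ω → α)
    (x : Fin r → ι) (ω : Ω) : ℝ :=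
  Φ (fun a => ξ (x a) ω) - ∫ ω', Φ (fun a => ξ (x a) ω') ∂μ

variable {Φ : (Fin r → α) → ℝ}

lemma measurable_centeredKernel (hΦ : Measurable Φ) (x : Fin r → ι) :
    Measurable[⨆ i ∈ range x, mα.comap (ξ i)] (centeredKernel μ Φ ξ x) := by
  refine (measurable_id.sub_const _).comp (hΦ.comp
    (@measurable_pi_lambda _ _ _ (⨆ i ∈ range x, mα.comap (ξ i)) _ _ fun a => ?_))
  exact (comap_measurable (ξ (x a))).mono (le_biSup (fun i => mα.comap (ξ i)) (mem_range_self a))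
    le_rfl

section IsProbabilityMeasure

variable [IsProbabilityMeasure μ] (hξm : ∀ i, Measurable (ξ i)) (hΦ : Measurable Φ) {a b : ℝ}
  (hΦab : ∀ v, Φ v ∈ Icc a b)
include hξm hΦ hΦab

lemma hasSubgaussianMGF_centeredKernel (x : Fin r → ι) :
    HasSubgaussianMGF (centeredKernel μ Φ ξ x) ((‖b - a‖₊ / 2) ^ 2) μ :=
  hasSubgaussianMGF_of_mem_Icc (hΦ.comp (measurable_pi_lambda _ fun a => hξm (x a))).aemeasurable
    (ae_of_all _ fun _ => hΦab _)

lemma centeredKernel_le (x : Fin r → ι) (ω : Ω) : centeredKernel μ Φ ξ x ω ≤ b - a := by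
  have h_int : a ≤ ∫ ω', Φ (fun i => ξ (x i) ω') ∂μ := by
    simpa using integral_mono (integrable_const (μ := μ) a) (Integrable.of_mem_Icc a b
      (hΦ.comp (measurable_pi_lambda _ fun i => hξm (x i))).aemeasurable
      (ae_of_all _ fun _ => hΦab _)) fun _ => (hΦab _).1
  rw [centeredKernel]
  linarith [(hΦab fun i => ξ (x i) ω).2]

end IsProbabilityMeasure

variable [Fintype ι]

noncomputable def centeredUStat (μ : Measure Ω) (Φ : (Fin r → α) → ℝ) (ξ : ι → Ω → α)
    (ω : Ω) : ℝ :=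
  (Fintype.card (Fin r ↪ ι) : ℝ)⁻¹ * ∑ x : Fin r ↪ ι, centeredKernel μ Φ ξ x ω

lemma card_mul_centeredUStat (ω : Ω) :
    Fintype.card (Fin r ↪ ι) * centeredUStat μ Φ ξ ω
      = ∑ x : Fin r ↪ ι, centeredKernel μ Φ ξ x ω := by
  rcases (Fintype.card (Fin r ↪ ι)).eq_zero_or_pos with h | h
  · simp [Fintype.card_eq_zero_iff.1 h]
  · rw [centeredUStat, mul_inv_cancel_left₀ (by positivity)]

lemma centeredUStat_eq_sum_perm [DecidableEq ι] {m : ℕ} (hm : 0 < m) (blk : Fin m → Fin r ↪ ι)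
    (ω : Ω) :
    centeredUStat μ Φ ξ ω = ∑ σ : Equiv.Perm ι, (Fintype.card (Equiv.Perm ι) : ℝ)⁻¹ *
      ((m : ℝ)⁻¹ * ∑ k, centeredKernel μ Φ ξ ⇑(σ • blk k) ω) := by
  have := Equiv.Perm.isMultiplyPretransitive ι r
  have h_avg : (Fintype.card (Fin r ↪ ι) : ℝ) *
      ∑ σ : Equiv.Perm ι, ∑ k, centeredKernel μ Φ ξ ⇑(σ • blk k) ω
      = m * Fintype.card (Equiv.Perm ι) * ∑ x : Fin r ↪ ι, centeredKernel μ Φ ξ x ω := by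
    rw [Finset.sum_comm, Finset.mul_sum]
    simp only [← nsmul_eq_mul,
      MulAction.card_nsmul_sum_smul_eq (fun x : Fin r ↪ ι => centeredKernel μ Φ ξ x ω)]
    simp [nsmul_eq_mul, mul_assoc]
  have : Nonempty (Fin r ↪ ι) := ⟨blk ⟨0, hm⟩⟩
  simp_rw [← Finset.mul_sum, centeredUStat]
  field_simp
  rw [h_avg]
  ring

theorem iIndepFun.hasSubgaussianMGF_centeredUStat [DecidableEq ι] (hξ : iIndepFun ξ μ)
    (hξm : ∀ i, Measurable (ξ i)) (hΦ : Measurable Φ) {a b : ℝ} (hΦab : ∀ v, Φ v ∈ Icc a b)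
    {m : ℕ} (hm : 0 < m) (hmr : m * r ≤ Fintype.card ι) :
    HasSubgaussianMGF (centeredUStat μ Φ ξ) ((‖b - a‖₊ / 2) ^ 2 / m) μ := by
  have := hξ.isProbabilityMeasure
  obtain ⟨e⟩ : Nonempty (Fin m × Fin r ↪ ι) :=
    Function.Embedding.nonempty_of_card_le (by simpa using hmr)
  set blk : Fin m → Fin r ↪ ι := fun k => (Function.Embedding.sectR k (Fin r)).trans e
  have h_block (σ : Equiv.Perm ι) : HasSubgaussianMGF
      (fun ω => ∑ k, centeredKernel μ Φ ξ ⇑(σ • blk k) ω) (m * (‖b - a‖₊ / 2) ^ 2) μ := by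
    convert hξ.hasSubgaussianMGF_sum_of_pairwiseDisjoint hξm (B := fun k => range ⇑(σ • blk k))
      ?_ (fun k _ => measurable_centeredKernel hΦ _)
      (fun k _ => hasSubgaussianMGF_centeredKernel hξm hΦ hΦab _)
    · simp
    · intro k _ l _ hkl
      refine Set.disjoint_left.2 ?_
      rintro _ ⟨p, rfl⟩ ⟨q, hq⟩
      simp only [Function.Embedding.smul_apply, Function.Embedding.trans_apply,
        Function.Embedding.sectR_apply, Equiv.Perm.smul_def, EmbeddingLike.apply_eq_iff_eq,
        Prod.mk.injEq, blk] at hq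
      exact hkl hq.1.symm
  have h_avg := HasSubgaussianMGF.sum_mul_of_sum_eq_one (s := Finset.univ)
    (w := fun _ : Equiv.Perm ι => (Fintype.card (Equiv.Perm ι) : ℝ)⁻¹) (fun _ _ => by positivity)
    (by simp) fun σ _ => (h_block σ).const_mul (m : ℝ)⁻¹
  convert h_avg using 1
  · exact funext (centeredUStat_eq_sum_perm hm blk)
  · refine NNReal.eq ?_
    change _ = (m : ℝ)⁻¹ ^ 2 * ((m * (‖b - a‖₊ / 2) ^ 2 : ℝ≥0) : ℝ)
    push_cast
    field_simp

end ProbabilityTheory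

section Combinatorics

open Finset

variable {ι M : Type*} [Fintype ι] [LinearOrder ι] [AddCommMonoid M]

lemma two_nsmul_sum_filter_lt {h : ι → ι → M} (hh : ∀ k l, h k l = h l k) :
    2 • ∑ p ∈ univ.filter (fun p : ι × ι => p.1 < p.2), h p.1 p.2
      = ∑ p ∈ univ.offDiag, h p.1 p.2 := by
  have h_split : (univ : Finset ι).offDiag =
      univ.filter (fun p : ι × ι => p.1 < p.2) ∪ univ.filter (fun p : ι × ι => p.2 < p.1) := by
    ext p
    simp
  rw [h_split, sum_union (disjoint_filter.2 fun p _ h₁ h₂ => lt_asymm h₁ h₂), two_nsmul]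
  congr 1
  exact sum_nbij' Prod.swap Prod.swap (by simp) (by simp) (by simp) (by simp) fun p _ => hh _ _

lemma sum_embedding_fin_three (g : (Fin 3 → ι) → M) :
    ∑ x : Fin 3 ↪ ι, g x = ∑ p ∈ univ.offDiag, ∑ j ∈ univ \ {p.1, p.2}, g ![j, p.1, p.2] := by
  rw [sum_sigma']
  refine sum_bij' (fun x _ => ⟨(x 1, x 2), x 0⟩) (fun q hq => ⟨![q.2, q.1.1, q.1.2], ?_⟩)
    (fun x _ => by simp [x.injective.eq_iff]) (fun _ _ => mem_univ _)
    (fun x _ => by ext a; fin_cases a <;> rfl) (fun _ _ => rfl)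
    (fun x _ => congrArg g (by ext a; fin_cases a <;> rfl))
  intro a b
  fin_cases a <;> fin_cases b <;> simp_all [eq_comm]

lemma two_mul_sum_filter_lt_le {g : (Fin 3 → ι) → ℝ} (hg : ∀ x, g x ≤ 1)
    (hsymm : ∀ j k l, g ![j, k, l] = g ![j, l, k]) :
    2 * ∑ j, ∑ p ∈ univ.filter (fun p : ι × ι => p.1 < p.2), g ![j, p.1, p.2]
      ≤ ∑ x : Fin 3 ↪ ι, g x + 2 * #(univ : Finset ι).offDiag := by
  calc 2 * ∑ j, ∑ p ∈ univ.filter (fun p : ι × ι => p.1 < p.2), g ![j, p.1, p.2]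
      = ∑ p ∈ univ.offDiag, ∑ j, g ![j, p.1, p.2] := by
        rw [mul_sum]
        refine (sum_congr rfl fun j _ => ?_).trans sum_comm
        rw [← two_nsmul_sum_filter_lt (hsymm j), two_nsmul, two_mul]
    _ = ∑ x : Fin 3 ↪ ι, g x + ∑ p ∈ univ.offDiag, (g ![p.1, p.1, p.2] + g ![p.2, p.1, p.2]) := by
        rw [sum_embedding_fin_three, ← sum_add_distrib]
        refine sum_congr rfl fun p hp => ?_
        rw [← sum_pair (f := fun j => g ![j, p.1, p.2]) (mem_offDiag.1 hp).2.2,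
          sum_sdiff (subset_univ _)]
    _ ≤ ∑ x : Fin 3 ↪ ι, g x + ∑ p ∈ univ.offDiag, (2 : ℝ) := by
        gcongr with p
        linarith [hg ![p.1, p.1, p.2], hg ![p.2, p.1, p.2]]
    _ = ∑ x : Fin 3 ↪ ι, g x + 2 * #(univ : Finset ι).offDiag := by
        rw [sum_const, nsmul_eq_mul, mul_comm]

end Combinatorics

/-- `Gterm ξ j (k, l) ω = Gkernel ![ξ j ω, ξ k ω, ξ l ω]`. -/
noncomputable def Gkernel (v : Fin 3 → (ℝ × ℝ) × ℝ) : ℝ :=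
  hball (v 1).2 (v 2).2 (v 0).1.1 * hball (v 1).2 (v 2).2 (v 0).1.2

lemma hball_comm (s t x : ℝ) : hball s t x = hball t s x := by
  rw [hball, hball, min_comm, max_comm]

lemma hball_mem_Icc (s t x : ℝ) : hball s t x ∈ Icc 0 1 := by
  unfold hball
  split <;> norm_num

lemma Gkernel_mem_Icc (v : Fin 3 → (ℝ × ℝ) × ℝ) : Gkernel v ∈ Icc 0 1 :=
  ⟨mul_nonneg (hball_mem_Icc ..).1 (hball_mem_Icc ..).1,
    mul_le_one₀ (hball_mem_Icc ..).2 (hball_mem_Icc ..).1 (hball_mem_Icc ..).2⟩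

lemma measurable_Gkernel : Measurable Gkernel := by
  have h_hball : Measurable fun p : ℝ × ℝ × ℝ => hball p.1 p.2.1 p.2.2 := by
    refine Measurable.ite ?_ measurable_const measurable_const
    exact (measurableSet_le (f := fun p : ℝ × ℝ × ℝ => min p.1 p.2.1) (by fun_prop)
      (by fun_prop)).inter
      (measurableSet_le (g := fun p : ℝ × ℝ × ℝ => max p.1 p.2.1) (by fun_prop) (by fun_prop))
  exact (h_hball.comp (f := fun v : Fin 3 → (ℝ × ℝ) × ℝ => ((v 1).2, (v 2).2, (v 0).1.1))
    (by fun_prop)).mul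
    (h_hball.comp (f := fun v : Fin 3 → (ℝ × ℝ) × ℝ => ((v 1).2, (v 2).2, (v 0).1.2)) (by fun_prop))

section

variable {Ω : Type*} [MeasurableSpace Ω] (μ : Measure Ω) {N : ℕ}
  (ξ : Fin N → Ω → (ℝ × ℝ) × ℝ)

lemma Aterm_eq (ω : Ω) : Aterm μ ξ ω = ((N : ℝ) * N.choose 2)⁻¹ *
    ∑ j, ∑ p ∈ Finset.univ.filter (fun p : Fin N × Fin N => p.1 < p.2),
      centeredKernel μ Gkernel ξ ![j, p.1, p.2] ω := rfl

lemma centeredKernel_Gkernel_swap (j k l : Fin N) :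
    centeredKernel μ Gkernel ξ ![j, k, l] = centeredKernel μ Gkernel ξ ![j, l, k] := by
  ext ω
  simp [centeredKernel, Gkernel, hball_comm]

variable (hξm : ∀ j, Measurable (ξ j))
include hξm

lemma measureReal_le_centeredUStat_Gkernel_le (hξ : iIndepFun ξ μ) (hN : 3 ≤ N) {s : ℝ}
    (hs : 0 ≤ s) :
    μ.real {ω | s ≤ centeredUStat μ Gkernel ξ ω} ≤ exp (-((N : ℝ) * s ^ 2) / 8) := by
  have h16 : (N : ℝ) ≤ 16 * (N / 3 : ℕ) := by exact_mod_cast (by omega : N ≤ 16 * (N / 3))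
  calc μ.real {ω | s ≤ centeredUStat μ Gkernel ξ ω}
      ≤ _ := (hξ.hasSubgaussianMGF_centeredUStat hξm measurable_Gkernel Gkernel_mem_Icc
          (m := N / 3) (by omega) (by simpa using Nat.div_mul_le_self N 3)).measure_ge_le hs
    _ = exp (-(2 * (N / 3 : ℕ) * s ^ 2)) := by
        congr 1
        push_cast
        field_simp
        simp
    _ ≤ exp (-((N : ℝ) * s ^ 2) / 8) := by
        gcongr
        nlinarith

variable [IsProbabilityMeasure μ]

lemma centeredKernel_Gkernel_le_one (x : Fin 3 → Fin N) (ω : Ω) :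
    centeredKernel μ Gkernel ξ x ω ≤ 1 := by
  simpa using centeredKernel_le hξm measurable_Gkernel Gkernel_mem_Icc x ω

lemma Aterm_le_one (ω : Ω) : Aterm μ ξ ω ≤ 1 := by
  rw [Aterm_eq]
  refine inv_mul_le_one_of_le₀ ?_ (by positivity)
  calc ∑ j, ∑ p ∈ Finset.univ.filter (fun p : Fin N × Fin N => p.1 < p.2),
        centeredKernel μ Gkernel ξ ![j, p.1, p.2] ω
      ≤ ∑ _j : Fin N, ∑ _p ∈ Finset.univ.filter (fun p : Fin N × Fin N => p.1 < p.2), 1 := by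
        gcongr
        exact centeredKernel_Gkernel_le_one μ ξ hξm _ ω
    _ = N * N.choose 2 := by simp [Fintype.card_product_filter_lt]

lemma mul_Aterm_le (hN : 2 ≤ N) (ω : Ω) :
    N * Aterm μ ξ ω ≤ (N - 2) * centeredUStat μ Gkernel ξ ω + 2 := by
  have h_comb := two_mul_sum_filter_lt_le (centeredKernel_Gkernel_le_one μ ξ hξm · ω)
    fun j k l => congrFun (centeredKernel_Gkernel_swap μ ξ j k l) ω
  rw [← card_mul_centeredUStat, Fintype.card_embedding_eq, Finset.offDiag_card] at h_comb
  simp only [Fintype.card_fin, Finset.card_univ, Nat.descFactorial, Nat.sub_zero,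
    mul_one] at h_comb
  push_cast [Nat.cast_sub (by omega : 2 ≤ N), Nat.cast_sub (by omega : 1 ≤ N),
    Nat.cast_sub (Nat.le_mul_self N)] at h_comb
  have hN1 : 0 < (N : ℝ) - 1 := by
    have : (2 : ℝ) ≤ N := by exact_mod_cast hN
    linarith
  rw [Aterm_eq, Nat.cast_choose_two]
  field_simp
  linarith

lemma le_centeredUStat_of_two_mul_lt_Aterm (hN : 3 ≤ N) {s : ℝ} (hNs : 2 ≤ N * s) {ω : Ω}
    (hA : 2 * s < Aterm μ ξ ω) : s ≤ centeredUStat μ Gkernel ξ ω := by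
  have hN' : (3 : ℝ) ≤ N := by exact_mod_cast hN
  have hs : 0 < s := by nlinarith
  by_contra! h
  linarith [mul_Aterm_le μ ξ hξm (by omega) ω,
    mul_lt_mul_of_pos_left hA (by linarith : (0 : ℝ) < N),
    mul_lt_mul_of_pos_left h (by linarith : (0 : ℝ) < N - 2)]

end

theorem stmt6_general {Ω : Type*} [MeasurableSpace Ω] (μ : Measure Ω) [IsProbabilityMeasure μ]
    {N : ℕ} (ξ : Fin N → Ω → (ℝ × ℝ) × ℝ) (hξm : ∀ j, Measurable (ξ j))
    (hξindep : iIndepFun ξ μ) :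
    ∀ s : ℝ, 0 < s →
      (μ {ω | Aterm μ ξ ω > 2 * s}).toReal ≤ 2 * Real.exp (-((N : ℝ) * s ^ 2) / 8) := by
  intro s hs
  rcases lt_or_ge (1 / 2) s with hs_large | hs_small
  · have h_empty : {ω | Aterm μ ξ ω > 2 * s} = ∅ :=
      eq_empty_of_forall_notMem fun ω hω => by linarith [Aterm_le_one μ ξ hξm ω, hω.out]
    rw [h_empty, measure_empty, ENNReal.toReal_zero]
    positivity
  rcases lt_or_ge ((N : ℝ) * s) 2 with hNs | hNs
  · have : (N : ℝ) * s ^ 2 ≤ 1 := by nlinarith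
    have h_exp := add_one_le_exp (-((N : ℝ) * s ^ 2) / 8)
    calc (μ {ω | Aterm μ ξ ω > 2 * s}).toReal ≤ 1 := measureReal_le_one
      _ ≤ 2 * exp (-((N : ℝ) * s ^ 2) / 8) := by linarith
  have hN : 3 ≤ N := by
    have : (3 : ℝ) ≤ N := by nlinarith
    exact_mod_cast this
  calc (μ {ω | Aterm μ ξ ω > 2 * s}).toReal ≤ μ.real {ω | s ≤ centeredUStat μ Gkernel ξ ω} :=
        measureReal_mono fun ω hω => le_centeredUStat_of_two_mul_lt_Aterm μ ξ hξm hN hNs hω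
    _ ≤ exp (-((N : ℝ) * s ^ 2) / 8) :=
        measureReal_le_centeredUStat_Gkernel_le μ ξ hξm hξindep hN hs.le
    _ ≤ 2 * exp (-((N : ℝ) * s ^ 2) / 8) := le_mul_of_one_le_left (exp_nonneg _) one_le_two

/-- **Bound for the term A.** In the pick-freeze setting with real output,
with `(Z_j, Z_j^ν)`, `j = 1,…,N`, i.i.d. copies of `(Z, Z^ν)` and `W₁,…,W_N` i.i.d. copies
of `Z` independent of them, for every `s > 0`, `P(A_N > 2s) ≤ 2 exp(-N s² / 8)`. -/
theorem stmt6 {Ω : Type*} [MeasurableSpace Ω] (μ : Measure Ω) [IsProbabilityMeasure μ]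
    {d : ℕ} (X X' : Ω → Fin d → ℝ)
    (hX : Measurable X) (hX' : Measurable X')
    (hcoord : iIndepFun (fun i ω => X ω i) μ)
    (hXX' : IndepFun X X' μ) (hid : IdentDistrib X' X μ μ)
    (ν : Finset (Fin d)) (f : (Fin d → ℝ) → ℝ) (hf : Measurable f)
    (Z Zν : Ω → ℝ)
    (hZ : Z = fun ω => f (X ω))
    (hZν : Zν = fun ω => f (fun i => if i ∈ ν then X ω i else X' ω i))
    {N : ℕ} (ξ : Fin N → Ω → (ℝ × ℝ) × ℝ) (hξm : ∀ j, Measurable (ξ j))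
    (hξindep : iIndepFun ξ μ)
    (hξlaw : ∀ j, μ.map (ξ j) = (μ.map (fun ω => (Z ω, Zν ω))).prod (μ.map Z)) :
    ∀ s : ℝ, 0 < s →
      (μ {ω | Aterm μ ξ ω > 2 * s}).toReal ≤ 2 * Real.exp (-((N : ℝ) * s ^ 2) / 8) :=
  stmt6_general μ ξ hξm hξindep
end

section
/- (Vanishing index implies equality of distributions, real case.) In the pick-freeze setting with real output, assume the law of Z admits a density that is strictly positive Lebesgue-almost everywhere on ℝ, and let κ be a regular conditional distribution of Z given X_ν. If for (law of Z)⊗(law of Z)-almost every pair (z₁, z₂), one has κ(·, [min(z₁,z₂), max(z₁,z₂)]) = P( min(z₁,z₂) ≤ Z ≤ max(z₁,z₂) ) almost surely, then almost surely κ(·, B) = P(Z ∈ B) for every Borel set B ⊂ ℝ; that is, the conditional distribution of Z given X_ν coincides almost surely with the unconditional distribution of Z. -/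
/-!
By Fubini the hypothesis can be read as: for almost every `ω`, the probability measures `κ ω`
and `law(Z)` agree on `[min z₁ z₂, max z₁ z₂]` for `law(Z) ⊗ law(Z)`-almost every pair. Since
the density of `Z` is positive, Lebesgue measure is absolutely continuous with respect to
`law(Z)`, so the good pairs are dense in `ℝ²`. Every interval `[a, b]` is then squeezed between
good intervals `[z₁, z₂] ⊇ [a, b]` shrinking to it, and measures agreeing on all closed
intervals are equal.
-/

open MeasureTheory ProbabilityTheory Set Filter Topology

lemma tendsto_measure_Icc_sub_add (P : Measure ℝ) [IsFiniteMeasureOnCompacts P] (a b : ℝ) :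
    Tendsto (fun δ ↦ P (Icc (a - δ) (b + δ))) (𝓝[>] 0) (𝓝 (P (Icc a b))) := by
  have hInter : ⋂ δ > (0 : ℝ), Icc (a - δ) (b + δ) = Icc a b := by
    ext x
    simp only [mem_iInter, mem_Icc]
    refine ⟨fun h ↦ ⟨le_of_forall_pos_lt_add fun δ hδ ↦ ?_, le_of_forall_pos_lt_add fun δ hδ ↦ ?_⟩,
      fun h δ hδ ↦ ⟨by linarith [h.1], by linarith [h.2]⟩⟩
    · linarith [(h (δ / 2) (half_pos hδ)).1]
    · linarith [(h (δ / 2) (half_pos hδ)).2]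
  rw [← hInter]
  refine tendsto_measure_biInter_gt (fun _ _ ↦ nullMeasurableSet_Icc) ?_
    ⟨1, zero_lt_one, isCompact_Icc.measure_ne_top⟩
  exact fun r s _ hrs ↦ Icc_subset_Icc (by linarith) (by linarith)

lemma tendsto_measure_Icc_of_mem_Icc (P : Measure ℝ) [IsFiniteMeasureOnCompacts P] {a b : ℝ}
    {l u : ℝ → ℝ} (hl : ∀ δ > 0, l δ ∈ Icc (a - δ) a) (hu : ∀ δ > 0, u δ ∈ Icc b (b + δ)) :
    Tendsto (fun δ ↦ P (Icc (l δ) (u δ))) (𝓝[>] 0) (𝓝 (P (Icc a b))) := by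
  refine tendsto_of_tendsto_of_tendsto_of_le_of_le' tendsto_const_nhds
    (tendsto_measure_Icc_sub_add P a b) ?_ ?_ <;>
  filter_upwards [self_mem_nhdsWithin] with δ (hδ : 0 < δ) <;> apply measure_mono
  · exact Icc_subset_Icc (hl δ hδ).2 (hu δ hδ).1
  · exact Icc_subset_Icc (hl δ hδ).1 (hu δ hδ).2

lemma MeasureTheory.Measure.ext_of_ae_Icc_min_max {m : Measure (ℝ × ℝ)} [m.IsOpenPosMeasure]
    (P Q : Measure ℝ) [IsFiniteMeasureOnCompacts P] [IsFiniteMeasureOnCompacts Q]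
    (h : ∀ᵐ p ∂m, P (Icc (min p.1 p.2) (max p.1 p.2)) = Q (Icc (min p.1 p.2) (max p.1 p.2))) :
    P = Q := by
  refine Measure.ext_of_Icc P Q fun a b _ ↦ ?_
  have hgood : ∀ δ > (0 : ℝ), ∃ p : ℝ × ℝ, p ∈ Ioo (a - δ) a ×ˢ Ioo b (b + δ) ∧
      P (Icc (min p.1 p.2) (max p.1 p.2)) = Q (Icc (min p.1 p.2) (max p.1 p.2)) := fun δ hδ ↦
    (m.dense_of_ae h).inter_open_nonempty _ (isOpen_Ioo.prod isOpen_Ioo)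
      ((nonempty_Ioo.2 (by linarith)).prod (nonempty_Ioo.2 (by linarith)))
  choose! p hp hPQ using hgood
  have hl : ∀ δ > 0, (p δ).1 ∈ Icc (a - δ) a := fun δ hδ ↦ Ioo_subset_Icc_self (hp δ hδ).1
  have hu : ∀ δ > 0, (p δ).2 ∈ Icc b (b + δ) := fun δ hδ ↦ Ioo_subset_Icc_self (hp δ hδ).2
  have hmin : ∀ δ > 0, min (p δ).1 (p δ).2 = (p δ).1 := fun δ hδ ↦ min_eq_left (by
    linarith [(hl δ hδ).2, (hu δ hδ).1])
  have hmax : ∀ δ > 0, max (p δ).1 (p δ).2 = (p δ).2 := fun δ hδ ↦ max_eq_right (by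
    linarith [(hl δ hδ).2, (hu δ hδ).1])
  refine tendsto_nhds_unique (tendsto_measure_Icc_of_mem_Icc P hl hu)
    ((tendsto_measure_Icc_of_mem_Icc Q hl hu).congr' ?_)
  filter_upwards [self_mem_nhdsWithin] with δ (hδ : 0 < δ)
  simpa only [hmin δ hδ, hmax δ hδ] using (hPQ δ hδ).symm

lemma ProbabilityTheory.Kernel.measurable_apply_Icc {β : Type*} [MeasurableSpace β]
    (η : Kernel β ℝ) [IsSFiniteKernel η] {l u : β → ℝ} (hl : Measurable l) (hu : Measurable u) :
    Measurable fun x ↦ η x (Icc (l x) (u x)) :=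
  Kernel.measurable_kernel_prodMk_left (t := {q : β × ℝ | l q.1 ≤ q.2 ∧ q.2 ≤ u q.1})
    ((measurableSet_le (hl.comp measurable_fst) measurable_snd).inter
      (measurableSet_le measurable_snd (hu.comp measurable_fst)))

theorem stmt8_general {Ω : Type*} [MeasurableSpace Ω] (μ : Measure Ω) [IsProbabilityMeasure μ]
    (Z : Ω → ℝ)
    (ρ : ℝ → ENNReal) (hρm : Measurable ρ)
    (hρlaw : μ.map Z = volume.withDensity ρ)
    (hρpos : ∀ᵐ x ∂(volume : Measure ℝ), 0 < ρ x)
    (κ : Ω → Measure ℝ) (hκprob : ∀ ω, IsProbabilityMeasure (κ ω))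
    (hκmeas : ∀ B : Set ℝ, MeasurableSet B → Measurable (fun ω => κ ω B))
    (hyp : ∀ᵐ p ∂((μ.map Z).prod (μ.map Z)), ∀ᵐ ω ∂μ,
      κ ω (Set.Icc (min p.1 p.2) (max p.1 p.2))
        = μ.map Z (Set.Icc (min p.1 p.2) (max p.1 p.2))) :
    ∀ᵐ ω ∂μ, κ ω = μ.map Z := by
  let K : Kernel Ω ℝ := ⟨κ, Measure.measurable_of_measurable_coe κ hκmeas⟩
  have : IsMarkovKernel K := ⟨hκprob⟩
  have hmin : Measurable fun q : (ℝ × ℝ) × Ω ↦ min q.1.1 q.1.2 := by fun_prop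
  have hmax : Measurable fun q : (ℝ × ℝ) × Ω ↦ max q.1.1 q.1.2 := by fun_prop
  have hgood : MeasurableSet {q : (ℝ × ℝ) × Ω |
      κ q.2 (Icc (min q.1.1 q.1.2) (max q.1.1 q.1.2))
        = μ.map Z (Icc (min q.1.1 q.1.2) (max q.1.1 q.1.2))} :=
    measurableSet_eq_fun (Kernel.measurable_apply_Icc (K.comap Prod.snd measurable_snd) hmin hmax)
      (Kernel.measurable_apply_Icc (Kernel.const _ (μ.map Z)) hmin hmax)
  have hvol : (volume : Measure ℝ) ≪ μ.map Z := hρlaw ▸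
    withDensity_absolutelyContinuous' hρm.aemeasurable (hρpos.mono fun _ h ↦ h.ne')
  filter_upwards [(Measure.ae_ae_comm hgood).1 hyp] with ω hω
  exact Measure.ext_of_ae_Icc_min_max (m := volume.prod volume) _ _ ((hvol.prod hvol).ae_le hω)

/-- **Vanishing index implies equality of distributions, real case.**
In the pick-freeze setting with real output, assume the law of `Z` admits a density `ρ`
(w.r.t. Lebesgue measure) that is strictly positive almost everywhere, and let `κ` be a
regular conditional distribution of `Z` given `X_ν`.  If for (law of `Z`)⊗(law of `Z`)-
almost every pair `(z₁, z₂)` one has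
`κ(·, [min(z₁,z₂), max(z₁,z₂)]) = P(min(z₁,z₂) ≤ Z ≤ max(z₁,z₂))` almost surely, then
almost surely `κ(·, B) = P(Z ∈ B)` for every Borel set `B`, i.e. the conditional
distribution of `Z` given `X_ν` coincides almost surely with the law of `Z`. -/
theorem stmt8 {Ω : Type*} [MeasurableSpace Ω] (μ : Measure Ω) [IsProbabilityMeasure μ]
    {d : ℕ} (X : Ω → Fin d → ℝ) (hX : Measurable X)
    (hcoord : iIndepFun (fun i ω => X ω i) μ)
    (ν : Finset (Fin d)) (f : (Fin d → ℝ) → ℝ) (hf : Measurable f)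
    (Z : Ω → ℝ) (hZ : Z = fun ω => f (X ω))
    (ρ : ℝ → ENNReal) (hρm : Measurable ρ)
    (hρlaw : μ.map Z = volume.withDensity ρ)
    (hρpos : ∀ᵐ x ∂(volume : Measure ℝ), 0 < ρ x)
    (κ : Ω → Measure ℝ) (hκprob : ∀ ω, IsProbabilityMeasure (κ ω))
    (hκmeas : ∀ B : Set ℝ, MeasurableSet B → Measurable (fun ω => κ ω B))
    (hκcond : ∀ B : Set ℝ, MeasurableSet B →
      (fun ω => (κ ω B).toReal)
        =ᵐ[μ] μ[(fun ω => Set.indicator B (fun _ => (1 : ℝ)) (Z ω)) |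
          MeasurableSpace.comap (fun ω (i : ν) => X ω i) inferInstance])
    (hyp : ∀ᵐ p ∂((μ.map Z).prod (μ.map Z)), ∀ᵐ ω ∂μ,
      κ ω (Set.Icc (min p.1 p.2) (max p.1 p.2))
        = μ.map Z (Set.Icc (min p.1 p.2) (max p.1 p.2))) :
    ∀ᵐ ω ∂μ, κ ω = μ.map Z :=
  stmt8_general μ Z ρ hρm hρlaw hρpos κ hκprob hκmeas hyp
end

section
/- Let α > 0, let X₁ be Bernoulli(p) with 0 ≤ p ≤ 1 and X₂ a real random variable independent of X₁ with continuous cumulative distribution function F, and set Z = αX₁ + X₂. For s ≤ t let H(s,t) = P(s ≤ Z ≤ t) and H¹(s,t) = P(s ≤ Z ≤ t | X₁). Then for all s ≤ t, E[ (H(s,t) − H¹(s,t))² ] = p(1−p) [ (F(t) − F(s)) − (F(t−α) − F(s−α)) ]². -/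
/-!
Given `X₁ = x`, independence makes `Z` distributed as `αx + X₂`, so `H¹(s,t) = g(X₁)` almost
surely with `g x = F(t - αx) - F(s - αx)`; continuity of `F` removes the atom at `s - αx`.
Taking expectations gives `H(s,t) = E[g(X₁)]`, so the left-hand side is the variance of
`g(X₁)`, and a function of a Bernoulli(p) variable has variance `p(1-p)(g 1 - g 0)²`.
-/

open MeasureTheory ProbabilityTheory Real Set

lemma integral_indicator_Icc_const_add (ν : Measure ℝ) (c s t : ℝ) :
    ∫ y, (Icc s t).indicator 1 (c + y) ∂ν = ν.real (Icc (s - c) (t - c)) := by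
  rw [← integral_indicator_one measurableSet_Icc, ← preimage_const_add_Icc]
  rfl

lemma measureReal_Icc_eq_cdf_sub (ν : Measure ℝ) [IsProbabilityMeasure ν] {a b : ℝ}
    (ha : ContinuousAt (cdf ν) a) (hab : a ≤ b) : ν.real (Icc a b) = cdf ν b - cdf ν a := by
  conv_lhs => rw [← measure_cdf ν]
  rw [Measure.real, StieltjesFunction.measure_Icc, ha.continuousWithinAt.leftLim_eq,
    ENNReal.toReal_ofReal (sub_nonneg.2 ((cdf ν).mono hab))]

section TwoPoint

variable {Ω α : Type*} {mΩ : MeasurableSpace Ω} {mα : MeasurableSpace α}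
  [MeasurableSingletonClass α] {μ : Measure Ω} {X : Ω → α} {p q : ℝ} {a b : α}

lemma integral_comp_of_map_eq_smul_dirac_add_smul_dirac (hX : AEMeasurable X μ)
    (hp : 0 ≤ p) (hq : 0 ≤ q)
    (hlaw : μ.map X = ENNReal.ofReal p • Measure.dirac a + ENNReal.ofReal q • Measure.dirac b)
    (φ : α → ℝ) : ∫ ω, φ (X ω) ∂μ = p * φ a + q * φ b := by
  have hφ : AEStronglyMeasurable φ (μ.map X) := hlaw ▸
    (aestronglyMeasurable_dirac.smul_measure _).add_measure
      (aestronglyMeasurable_dirac.smul_measure _)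
  rw [← integral_map hX hφ, hlaw,
    integral_add_measure ((integrable_dirac (by simp)).smul_measure (by simp))
      ((integrable_dirac (by simp)).smul_measure (by simp)),
    integral_smul_measure, integral_smul_measure, integral_dirac, integral_dirac,
    ENNReal.toReal_ofReal hp, ENNReal.toReal_ofReal hq, smul_eq_mul, smul_eq_mul]

lemma integral_sub_sq_of_map_eq_bernoulli (hX : AEMeasurable X μ) (hp0 : 0 ≤ p) (hp1 : p ≤ 1)
    (hlaw : μ.map X = ENNReal.ofReal p • Measure.dirac a
      + ENNReal.ofReal (1 - p) • Measure.dirac b) (φ : α → ℝ) :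
    ∫ ω, (∫ ω', φ (X ω') ∂μ - φ (X ω)) ^ 2 ∂μ
      = p * (1 - p) * (φ a - φ b) ^ 2 := by
  have hq : 0 ≤ 1 - p := sub_nonneg.2 hp1
  rw [integral_comp_of_map_eq_smul_dirac_add_smul_dirac hX hp0 hq hlaw φ,
    integral_comp_of_map_eq_smul_dirac_add_smul_dirac hX hp0 hq hlaw
      fun x => (p * φ a + (1 - p) * φ b - φ x) ^ 2]
  ring

end TwoPoint

namespace ProbabilityTheory

variable {Ω β γ : Type*} {mΩ : MeasurableSpace Ω} {mβ : MeasurableSpace β}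
  {mγ : MeasurableSpace γ} [StandardBorelSpace γ] [Nonempty γ]
  {μ : Measure Ω} [IsFiniteMeasure μ] {X : Ω → β} {Y : Ω → γ}

theorem IndepFun.condDistrib_ae_eq_const (h : IndepFun X Y μ) (hX : Measurable X)
    (hY : Measurable Y) : condDistrib Y X μ =ᵐ[μ.map X] Kernel.const β (μ.map Y) := by
  rw [condDistrib_ae_eq_iff_measure_eq_compProd X hY.aemeasurable, Measure.compProd_const,
    ← (indepFun_iff_map_prod_eq_prod_map_map hX.aemeasurable hY.aemeasurable).1 h]

theorem IndepFun.condExp_prod_ae_eq_integral_map {E : Type*} [NormedAddCommGroup E]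
    [NormedSpace ℝ E] [CompleteSpace E] (h : IndepFun X Y μ) (hX : Measurable X)
    (hY : Measurable Y) {f : β × γ → E} (hf : StronglyMeasurable f)
    (hf_int : Integrable (fun ω => f (X ω, Y ω)) μ) :
    μ[fun ω => f (X ω, Y ω) | mβ.comap X]
      =ᵐ[μ] fun ω => ∫ y, f (X ω, y) ∂(μ.map Y) := by
  filter_upwards [condExp_prod_ae_eq_integral_condDistrib hX hY.aemeasurable hf hf_int,
    ae_of_ae_map hX.aemeasurable (h.condDistrib_ae_eq_const hX hY)] with ω hcond hconst
  rw [hcond, hconst, Kernel.const_apply]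

end ProbabilityTheory

theorem stmt9_general {Ω : Type*} [MeasurableSpace Ω] (μ : Measure Ω) [IsProbabilityMeasure μ]
    (α p : ℝ) (hp0 : 0 ≤ p) (hp1 : p ≤ 1)
    (X₁ X₂ : Ω → ℝ) (hX₁ : Measurable X₁) (hX₂ : Measurable X₂)
    (hBer : μ.map X₁ = ENNReal.ofReal p • Measure.dirac (1 : ℝ)
      + ENNReal.ofReal (1 - p) • Measure.dirac (0 : ℝ))
    (hindep : IndepFun X₁ X₂ μ)
    (F : ℝ → ℝ) (hF : ∀ t, F t = (μ {ω | X₂ ω ≤ t}).toReal) (hFcont : Continuous F)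
    (Z : Ω → ℝ) (hZ : Z = fun ω => α * X₁ ω + X₂ ω)
    (H : ℝ → ℝ → ℝ) (hH : ∀ s t, H s t = (μ {ω | s ≤ Z ω ∧ Z ω ≤ t}).toReal)
    (H1 : ℝ → ℝ → Ω → ℝ)
    (hH1 : ∀ s t, H1 s t = μ[(fun ω => if s ≤ Z ω ∧ Z ω ≤ t then (1 : ℝ) else 0) |
      MeasurableSpace.comap X₁ inferInstance]) :
    ∀ s t : ℝ, s ≤ t →
      ∫ ω, (H s t - H1 s t ω) ^ 2 ∂μ
        = p * (1 - p) * ((F t - F s) - (F (t - α) - F (s - α))) ^ 2 := by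
  intro s t hst
  subst hZ
  have : IsProbabilityMeasure (μ.map X₂) := Measure.isProbabilityMeasure_map hX₂.aemeasurable
  have hF_cdf : F = cdf (μ.map X₂) := funext fun x => by
    rw [hF, cdf_eq_real, map_measureReal_apply hX₂ measurableSet_Iic]; rfl
  set Φ : ℝ × ℝ → ℝ := fun q => (Icc s t).indicator 1 (α * q.1 + q.2)
  set g : ℝ → ℝ := fun x => ∫ y, Φ (x, y) ∂(μ.map X₂)
  have hg : ∀ x, g x = F (t - α * x) - F (s - α * x) := fun x => by
    change ∫ y, (Icc s t).indicator 1 (α * x + y) ∂(μ.map X₂) = _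
    rw [integral_indicator_Icc_const_add, hF_cdf,
      measureReal_Icc_eq_cdf_sub _ (hF_cdf ▸ hFcont).continuousAt (by linarith)]
  have hS : MeasurableSet {ω | s ≤ α * X₁ ω + X₂ ω ∧ α * X₁ ω + X₂ ω ≤ t} :=
    (by fun_prop : Measurable fun ω => α * X₁ ω + X₂ ω) measurableSet_Icc
  have hH1_cond :
      H1 s t = μ[fun ω => Φ (X₁ ω, X₂ ω) | MeasurableSpace.comap X₁ inferInstance] := by
    rw [hH1 s t]
    congr 1 with ω
    simp [Φ, indicator_apply]
  have hH1_eq : H1 s t =ᵐ[μ] fun ω => g (X₁ ω) :=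
    hH1_cond ▸ hindep.condExp_prod_ae_eq_integral_map hX₁ hX₂
      ((measurable_const.indicator measurableSet_Icc).comp (by fun_prop)).stronglyMeasurable
      ((integrable_const 1).indicator hS)
  have hH_eq : H s t = ∫ ω, g (X₁ ω) ∂μ := by
    rw [← integral_congr_ae hH1_eq, hH1_cond, integral_condExp hX₁.comap_le, hH]
    exact (integral_indicator_one hS).symm
  calc ∫ ω, (H s t - H1 s t ω) ^ 2 ∂μ
        = ∫ ω, (∫ ω', g (X₁ ω') ∂μ - g (X₁ ω)) ^ 2 ∂μ :=
        integral_congr_ae (by filter_upwards [hH1_eq] with ω hω; rw [hω, hH_eq])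
    _ = p * (1 - p) * (g 1 - g 0) ^ 2 :=
        integral_sub_sq_of_map_eq_bernoulli hX₁.aemeasurable hp0 hp1 hBer g
    _ = _ := by
        rw [hg, hg, mul_one, mul_zero, sub_zero, sub_zero]
        ring

/-- Let `α > 0`, `X₁ ~ Bernoulli(p)` with `0 ≤ p ≤ 1`, `X₂` a real random
variable independent of `X₁` with continuous CDF `F`, and `Z = αX₁ + X₂`.  With
`H(s,t) = P(s ≤ Z ≤ t)` and `H¹(s,t) = P(s ≤ Z ≤ t | X₁)`, for all `s ≤ t`,
`E[(H(s,t) - H¹(s,t))²] = p(1-p)[(F(t) - F(s)) - (F(t-α) - F(s-α))]²`. -/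
theorem stmt9 {Ω : Type*} [MeasurableSpace Ω] (μ : Measure Ω) [IsProbabilityMeasure μ]
    (α p : ℝ) (hα : 0 < α) (hp0 : 0 ≤ p) (hp1 : p ≤ 1)
    (X₁ X₂ : Ω → ℝ) (hX₁ : Measurable X₁) (hX₂ : Measurable X₂)
    (hBer : μ.map X₁ = ENNReal.ofReal p • Measure.dirac (1 : ℝ)
      + ENNReal.ofReal (1 - p) • Measure.dirac (0 : ℝ))
    (hindep : IndepFun X₁ X₂ μ)
    (F : ℝ → ℝ) (hF : ∀ t, F t = (μ {ω | X₂ ω ≤ t}).toReal) (hFcont : Continuous F)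
    (Z : Ω → ℝ) (hZ : Z = fun ω => α * X₁ ω + X₂ ω)
    (H : ℝ → ℝ → ℝ) (hH : ∀ s t, H s t = (μ {ω | s ≤ Z ω ∧ Z ω ≤ t}).toReal)
    (H1 : ℝ → ℝ → Ω → ℝ)
    (hH1 : ∀ s t, H1 s t = μ[(fun ω => if s ≤ Z ω ∧ Z ω ≤ t then (1 : ℝ) else 0) |
      MeasurableSpace.comap X₁ inferInstance]) :
    ∀ s t : ℝ, s ≤ t →
      ∫ ω, (H s t - H1 s t ω) ^ 2 ∂μ
        = p * (1 - p) * ((F t - F s) - (F (t - α) - F (s - α))) ^ 2 :=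
  stmt9_general μ α p hp0 hp1 X₁ X₂ hX₁ hX₂ hBer hindep F hF hFcont Z hZ H hH H1 hH1
end

section
/- Let α > 0, b > 0, let X₁ be Bernoulli(p) with 0 ≤ p ≤ 1 and X₂ uniform on (0,b) independent of X₁, set Z = αX₁ + X₂, and let F be the cumulative distribution function of X₂, i.e. F(x) = min(max(x/b, 0), 1). Then E[ F(Z) − F(Z−α) ] = (α/b)(1 − α/(2b)) if α ≤ b, and E[ F(Z) − F(Z−α) ] = 1/2 if α > b. -/
open MeasureTheory ProbabilityTheory Real Set

/-!
Conditionally on `X₁ = a`, the expectation is one over `X₂` alone: `E[F(X₂ + α) - F(X₂)]` for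
`a = 1` and `E[F(X₂) - F(X₂ - α)]` for `a = 0`. Both equal the stated value, so `p` drops out.
Each is a difference of values of the primitive `Φ t = ∫₀ᵗ F`, which is `0`, `t² / (2b)` and
`t - b / 2` on `t ≤ 0`, `[0, b]` and `t ≥ b`.
-/

noncomputable def uniformCDF (b x : ℝ) : ℝ := min (max (x / b) 0) 1

section UniformCDF

variable {b : ℝ}

theorem continuous_uniformCDF : Continuous (uniformCDF b) :=
  ((continuous_id.div_const b).max continuous_const).min continuous_const

theorem uniformCDF_nonneg (x : ℝ) : 0 ≤ uniformCDF b x :=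
  le_min (le_max_right _ _) zero_le_one

theorem uniformCDF_le_one (x : ℝ) : uniformCDF b x ≤ 1 :=
  min_le_right _ _

theorem abs_uniformCDF_sub_le_one (x y : ℝ) : |uniformCDF b x - uniformCDF b y| ≤ 1 :=
  abs_sub_le_of_nonneg_of_le (uniformCDF_nonneg x) (uniformCDF_le_one x) (uniformCDF_nonneg y)
    (uniformCDF_le_one y)

theorem uniformCDF_of_nonpos (hb : 0 < b) {x : ℝ} (hx : x ≤ 0) : uniformCDF b x = 0 := by
  simp [uniformCDF, div_nonpos_of_nonpos_of_nonneg hx hb.le]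

theorem uniformCDF_of_mem_Icc (hb : 0 < b) {x : ℝ} (hx : x ∈ Icc 0 b) :
    uniformCDF b x = x / b := by
  rw [uniformCDF, max_eq_left (div_nonneg hx.1 hb.le), min_eq_left ((div_le_one hb).2 hx.2)]

theorem uniformCDF_of_le (hb : 0 < b) {x : ℝ} (hx : b ≤ x) : uniformCDF b x = 1 := by
  rw [uniformCDF, min_eq_right (le_max_of_le_left ((one_le_div hb).2 hx))]

theorem integral_uniformCDF_of_nonpos (hb : 0 < b) {t : ℝ} (ht : t ≤ 0) :
    ∫ x in 0..t, uniformCDF b x = 0 := by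
  rw [intervalIntegral.integral_congr (g := fun _ => 0) fun x hx =>
    uniformCDF_of_nonpos hb (by rw [uIcc_of_ge ht] at hx; exact hx.2)]
  simp

theorem integral_uniformCDF_of_mem_Icc (hb : 0 < b) {t : ℝ} (ht : t ∈ Icc 0 b) :
    ∫ x in 0..t, uniformCDF b x = t ^ 2 / (2 * b) := by
  rw [intervalIntegral.integral_congr (g := fun x => x / b) fun x hx =>
    uniformCDF_of_mem_Icc hb (by rw [uIcc_of_le ht.1] at hx; exact ⟨hx.1, hx.2.trans ht.2⟩)]
  rw [intervalIntegral.integral_div, integral_id]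
  field_simp
  ring

theorem integral_uniformCDF_of_le (hb : 0 < b) {t : ℝ} (ht : b ≤ t) :
    ∫ x in 0..t, uniformCDF b x = t - b / 2 := by
  have hint : ∀ u v, IntervalIntegrable (uniformCDF b) volume u v := fun _ _ =>
    continuous_uniformCDF.intervalIntegrable _ _
  rw [← intervalIntegral.integral_add_adjacent_intervals (hint 0 b) (hint b t),
    integral_uniformCDF_of_mem_Icc hb ⟨hb.le, le_rfl⟩,
    intervalIntegral.integral_congr (g := fun _ => 1) fun x hx =>
      uniformCDF_of_le hb (by rw [uIcc_of_le ht] at hx; exact hx.1)]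
  simp only [intervalIntegral.integral_const, smul_eq_mul, mul_one]
  field_simp
  ring

theorem integral_uniformCDF_comp_add_right (c : ℝ) :
    ∫ x in 0..b, uniformCDF b (x + c) =
      (∫ x in 0..b + c, uniformCDF b x) - ∫ x in 0..c, uniformCDF b x := by
  rw [intervalIntegral.integral_comp_add_right, zero_add,
    intervalIntegral.integral_interval_sub_left (continuous_uniformCDF.intervalIntegrable _ _)
      (continuous_uniformCDF.intervalIntegrable _ _)]

theorem integral_uniformCDF_sub_uniformCDF_comp_add_right (c d : ℝ) :
    ∫ x in 0..b, (uniformCDF b (x + c) - uniformCDF b (x + d)) =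
      ((∫ x in 0..b + c, uniformCDF b x) - ∫ x in 0..c, uniformCDF b x) -
        ((∫ x in 0..b + d, uniformCDF b x) - ∫ x in 0..d, uniformCDF b x) := by
  have hint (e : ℝ) : IntervalIntegrable (fun x => uniformCDF b (x + e)) volume 0 b :=
    (continuous_uniformCDF.comp (continuous_add_const e)).intervalIntegrable _ _
  rw [intervalIntegral.integral_sub (hint c) (hint d),
    integral_uniformCDF_comp_add_right, integral_uniformCDF_comp_add_right]

end UniformCDF

theorem integral_cond_Ioo {E : Type*} [NormedAddCommGroup E] [NormedSpace ℝ E]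
    (g : ℝ → E) {a b : ℝ} (hab : a ≤ b) :
    ∫ x, g x ∂(volume[|Ioo a b]) = (b - a)⁻¹ • ∫ x in a..b, g x := by
  rw [ProbabilityTheory.cond, integral_smul_measure, ← integral_Ioc_eq_integral_Ioo,
    ← intervalIntegral.integral_of_le hab, Real.volume_Ioo, ENNReal.toReal_inv,
    ENNReal.toReal_ofReal (sub_nonneg.2 hab)]

theorem ProbabilityTheory.IndepFun.integral_comp_eq_of_ae_integral_eq {Ω α β E : Type*}
    [MeasurableSpace Ω] [MeasurableSpace α] [MeasurableSpace β] [NormedAddCommGroup E] [NormedSpace ℝ E]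
    [CompleteSpace E] {μ : Measure Ω} [IsProbabilityMeasure μ] {X : Ω → α} {Y : Ω → β}
    (hX : AEMeasurable X μ) (hY : AEMeasurable Y μ) (hXY : IndepFun X Y μ) {f : α × β → E}
    (hf : Integrable f ((μ.map X).prod (μ.map Y))) {v : E}
    (hv : ∀ᵐ a ∂μ.map X, ∫ y, f (a, y) ∂μ.map Y = v) :
    ∫ ω, f (X ω, Y ω) ∂μ = v := by
  have : IsProbabilityMeasure (μ.map X) := Measure.isProbabilityMeasure_map hX
  have hmap := (indepFun_iff_map_prod_eq_prod_map_map hX hY).1 hXY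
  have hf' : Integrable f (μ.map fun ω => (X ω, Y ω)) := hmap ▸ hf
  rw [← integral_map (hX.prodMk hY) hf'.aestronglyMeasurable, hmap, integral_prod f hf,
    integral_congr_ae hv, integral_const, probReal_univ, one_smul]

theorem ae_eq_zero_or_eq_one_of_dirac_one_add_dirac_zero (p q : ENNReal) :
    ∀ᵐ a ∂(p • Measure.dirac (1 : ℝ) + q • Measure.dirac 0), a = 0 ∨ a = 1 := by
  rw [ae_add_measure_iff]
  exact ⟨Measure.ae_smul_measure (by simp [ae_dirac_eq]) _,
    Measure.ae_smul_measure (by simp [ae_dirac_eq]) _⟩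

section Expectation

variable {α b : ℝ}

theorem integral_uniformCDF_add_sub_uniformCDF (hb : 0 < b) (hα : 0 ≤ α) :
    ∫ y, (uniformCDF b (α + y) - uniformCDF b y) ∂(volume[|Ioo 0 b]) =
      if α ≤ b then α / b * (1 - α / (2 * b)) else 1 / 2 := by
  have h := integral_uniformCDF_sub_uniformCDF_comp_add_right (b := b) α 0
  simp only [add_zero, intervalIntegral.integral_same, sub_zero] at h
  rw [integral_cond_Ioo _ hb.le]
  simp only [add_comm α, h, sub_zero, smul_eq_mul]
  rw [integral_uniformCDF_of_le hb (le_add_of_nonneg_right hα), integral_uniformCDF_of_le hb le_rfl]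
  split_ifs with hαb
  · rw [integral_uniformCDF_of_mem_Icc hb ⟨hα, hαb⟩]
    field_simp
    ring
  · rw [integral_uniformCDF_of_le hb (not_le.1 hαb).le]
    field_simp
    ring

theorem integral_uniformCDF_sub_uniformCDF_sub (hb : 0 < b) (hα : 0 ≤ α) :
    ∫ y, (uniformCDF b y - uniformCDF b (y - α)) ∂(volume[|Ioo 0 b]) =
      if α ≤ b then α / b * (1 - α / (2 * b)) else 1 / 2 := by
  have h := integral_uniformCDF_sub_uniformCDF_comp_add_right (b := b) 0 (-α)
  simp only [add_zero, intervalIntegral.integral_same, sub_zero, ← sub_eq_add_neg] at h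
  rw [integral_cond_Ioo _ hb.le]
  simp only [h, sub_zero, smul_eq_mul]
  rw [integral_uniformCDF_of_le hb le_rfl, integral_uniformCDF_of_nonpos hb (neg_nonpos.2 hα)]
  split_ifs with hαb
  · rw [integral_uniformCDF_of_mem_Icc hb ⟨sub_nonneg.2 hαb, sub_le_self b hα⟩]
    field_simp
    ring
  · rw [integral_uniformCDF_of_nonpos hb (t := b - α) (by linarith)]
    field_simp
    ring

end Expectation

theorem stmt11_general {Ω : Type*} [MeasurableSpace Ω] (μ : Measure Ω) [IsProbabilityMeasure μ]
    (α b p : ℝ) (hα : 0 < α) (hb : 0 < b)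
    (X₁ X₂ : Ω → ℝ) (hX₁ : Measurable X₁) (hX₂ : Measurable X₂)
    (hBer : μ.map X₁ = ENNReal.ofReal p • Measure.dirac (1 : ℝ)
      + ENNReal.ofReal (1 - p) • Measure.dirac (0 : ℝ))
    (hUnif : μ.map X₂ = ProbabilityTheory.cond volume (Set.Ioo 0 b))
    (hindep : IndepFun X₁ X₂ μ)
    (Z : Ω → ℝ) (hZ : Z = fun ω => α * X₁ ω + X₂ ω)
    (F : ℝ → ℝ) (hF : ∀ x, F x = min (max (x / b) 0) 1) :
    ∫ ω, (F (Z ω) - F (Z ω - α)) ∂μ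
      = if α ≤ b then (α / b) * (1 - α / (2 * b)) else 1 / 2 := by
  obtain rfl : F = uniformCDF b := funext hF
  subst hZ
  have : IsProbabilityMeasure (μ.map X₁) := Measure.isProbabilityMeasure_map hX₁.aemeasurable
  have : IsProbabilityMeasure (μ.map X₂) := Measure.isProbabilityMeasure_map hX₂.aemeasurable
  refine hindep.integral_comp_eq_of_ae_integral_eq hX₁.aemeasurable hX₂.aemeasurable
    (f := fun q => uniformCDF b (α * q.1 + q.2) - uniformCDF b (α * q.1 + q.2 - α)) ?_ ?_
  · have hcont : Continuous fun q : ℝ × ℝ => α * q.1 + q.2 := by fun_prop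
    exact Integrable.of_bound
      ((continuous_uniformCDF.comp hcont).sub
        (continuous_uniformCDF.comp (hcont.sub continuous_const))).aestronglyMeasurable
      1 (ae_of_all _ fun q => abs_uniformCDF_sub_le_one _ _)
  · rw [hBer, hUnif]
    filter_upwards [ae_eq_zero_or_eq_one_of_dirac_one_add_dirac_zero _ _] with a ha
    rcases ha with rfl | rfl
    · simpa only [mul_zero, zero_add] using integral_uniformCDF_sub_uniformCDF_sub hb hα.le
    · simpa only [mul_one, add_sub_cancel_left] using integral_uniformCDF_add_sub_uniformCDF hb hα.le

/-- Let `α > 0`, `b > 0`, `X₁ ~ Bernoulli(p)` with `0 ≤ p ≤ 1`, `X₂`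
uniform on `(0,b)` independent of `X₁`, `Z = αX₁ + X₂`, and `F(x) = min(max(x/b,0),1)`
the CDF of `X₂`.  Then `E[F(Z) - F(Z-α)] = (α/b)(1 - α/(2b))` if `α ≤ b`, and
`E[F(Z) - F(Z-α)] = 1/2` if `α > b`. -/
theorem stmt11 {Ω : Type*} [MeasurableSpace Ω] (μ : Measure Ω) [IsProbabilityMeasure μ]
    (α b p : ℝ) (hα : 0 < α) (hb : 0 < b) (hp0 : 0 ≤ p) (hp1 : p ≤ 1)
    (X₁ X₂ : Ω → ℝ) (hX₁ : Measurable X₁) (hX₂ : Measurable X₂)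
    (hBer : μ.map X₁ = ENNReal.ofReal p • Measure.dirac (1 : ℝ)
      + ENNReal.ofReal (1 - p) • Measure.dirac (0 : ℝ))
    (hUnif : μ.map X₂ = ProbabilityTheory.cond volume (Set.Ioo 0 b))
    (hindep : IndepFun X₁ X₂ μ)
    (Z : Ω → ℝ) (hZ : Z = fun ω => α * X₁ ω + X₂ ω)
    (F : ℝ → ℝ) (hF : ∀ x, F x = min (max (x / b) 0) 1) :
    ∫ ω, (F (Z ω) - F (Z ω - α)) ∂μ
      = if α ≤ b then (α / b) * (1 - α / (2 * b)) else 1 / 2 :=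
  stmt11_general μ α b p hα hb X₁ X₂ hX₁ hX₂ hBer hUnif hindep Z hZ F hF
end
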